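/- arXiv:2407.07486 — 6 statements merged into one kernel-verified Lean document; each statement's English description precedes it below -/
import Mathlib

section
/- Let q ≥ 2 be an integer and a ≥ 1 an integer. Then ψ⁻_{1,a}(q) ≥ q^(binom(a+1,2)) · (1 − 1/q − 1/q² + 1/q^(a+1)). -/
/-- `ψ⁻_{a,b}(q) = ∏_{k=a}^{b} (q^k − 1)`, the empty product (b = a−1) being 1. -/
def psiMinus (q : ℚ) (a b : ℕ) : ℚ := ∏ k ∈ Finset.Icc a b, (q ^ k - 1)

theorem psiMinus_lower_bound (q a : ℕ) (hq : 2 ≤ q) (ha : 1 ≤ a) :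
    psiMinus (q : ℚ) 1 a ≥
      (q : ℚ) ^ ((a + 1).choose 2) *
        (1 - 1 / (q : ℚ) - 1 / (q : ℚ) ^ 2 + 1 / (q : ℚ) ^ (a + 1)) := by
  have hQ2 : (2:ℚ) ≤ (q:ℚ) := by exact_mod_cast hq
  have hQ0 : (0:ℚ) < q := by linarith
  have hQne : (q:ℚ) ≠ 0 := ne_of_gt hQ0
  induction a, ha using Nat.le_induction with
  | base =>
    simp only [psiMinus, Finset.Icc_self, Finset.prod_singleton]
    have h1 : ((1+1).choose 2) = 1 := by decide
    rw [h1]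
    have e : (q:ℚ)^1 * (1 - 1/(q:ℚ) - 1/(q:ℚ)^2 + 1/(q:ℚ)^(1+1)) = (q:ℚ)^1 - 1 := by
      field_simp
      ring
    rw [e]
  | succ n hn ih =>
    set A : ℚ := (q:ℚ) ^ ((n+1).choose 2) with hA
    set y : ℚ := (q:ℚ) ^ (n+1) with hy
    have hA0 : 0 < A := pow_pos hQ0 _
    have hy0 : 0 < y := pow_pos hQ0 _
    have hyne : y ≠ 0 := ne_of_gt hy0
    have hyge : (q:ℚ)^2 ≤ y := by
      rw [hy]; exact pow_le_pow_right₀ (by linarith) (by omega)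
    have hy1 : (1:ℚ) ≤ y := by nlinarith
    have hsplit : psiMinus (q:ℚ) 1 (n+1)
        = psiMinus (q:ℚ) 1 n * (y - 1) := by
      unfold psiMinus
      rw [Finset.prod_Icc_succ_top (by omega : 1 ≤ n+1)]
    have hchoose : (n+1+1).choose 2 = (n+1).choose 2 + (n+1) := by
      rw [Nat.choose_succ_succ]
      simp [Nat.choose_one_right, Nat.add_comm]
    have hpow : (q:ℚ) ^ ((n+1+1).choose 2) = A * y := by
      rw [hchoose, pow_add]
    have hQn2 : (q:ℚ) ^ (n+1+1) = y * (q:ℚ) := by rw [hy, pow_succ]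
    rw [hsplit, hpow, hQn2]
    have hstep1 : psiMinus (q:ℚ) 1 n * (y - 1)
        ≥ A * (1 - 1/(q:ℚ) - 1/(q:ℚ)^2 + 1/y) * (y - 1) :=
      mul_le_mul_of_nonneg_right ih (by linarith)
    refine le_trans ?_ hstep1
    have h2 : 1/y ≤ 1/(q:ℚ)^2 := one_div_le_one_div_of_le (by positivity) hyge
    have key : y * (1 - 1/(q:ℚ) - 1/(q:ℚ)^2 + 1/(y * (q:ℚ)))
        ≤ (1 - 1/(q:ℚ) - 1/(q:ℚ)^2 + 1/y) * (y - 1) := by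
      have e1 : y * (1 - 1/(q:ℚ) - 1/(q:ℚ)^2 + 1/(y * (q:ℚ)))
          = y * (1 - 1/(q:ℚ) - 1/(q:ℚ)^2) + 1/(q:ℚ) := by
        field_simp
      have e2 : (1 - 1/(q:ℚ) - 1/(q:ℚ)^2 + 1/y) * (y - 1)
          = y * (1 - 1/(q:ℚ) - 1/(q:ℚ)^2) - (1 - 1/(q:ℚ) - 1/(q:ℚ)^2) + 1 - 1/y := by
        field_simp
        ring
      rw [e1, e2]
      linarith
    calc A * y * (1 - 1/(q:ℚ) - 1/(q:ℚ)^2 + 1/(y * (q:ℚ)))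
        = A * (y * (1 - 1/(q:ℚ) - 1/(q:ℚ)^2 + 1/(y * (q:ℚ)))) := by ring
      _ ≤ A * ((1 - 1/(q:ℚ) - 1/(q:ℚ)^2 + 1/y) * (y - 1)) :=
          mul_le_mul_of_nonneg_left key (le_of_lt hA0)
      _ = A * (1 - 1/(q:ℚ) - 1/(q:ℚ)^2 + 1/y) * (y - 1) := by ring
end

section
/- Let q ≥ 2 be an integer and a ≥ 1 an integer. Then ψ⁻_{1,2a}(q) · (q^(2a+2) − 1)/(q² − 1) ≥ q^(binom(2a+2,2) − 1) · (1 − 1/q − 1/q³ + (q² − q + 1)/q^(2a+3)). -/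
lemma psiMinus_key (q u : ℚ) (hq : 2 ≤ q) (hu : q^2 ≤ u) :
    q^3*u^2*(q^5*u - q^4*u - q^2*u + q^2 - q + 1) ≤
    (q^3*u - q^2*u - u + q^2 - q + 1)*((q*u-1)*(q^4*u-1)) := by
  have hq0 : (0:ℚ) < q := by linarith
  have hu4 : (4:ℚ) ≤ u := by nlinarith
  have e : (q^3*u - q^2*u - u + q^2 - q + 1)*((q*u-1)*(q^4*u-1))
      - q^3*u^2*(q^5*u - q^4*u - q^2*u + q^2 - q + 1)
      = q^4*u*(u - 1 - q^2 + q) + (u-1)*(q*u-1) + q*(q-1) := by ring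
  have t1 : (0:ℚ) ≤ q^4*u*(u - 1 - q^2 + q) := by
    apply mul_nonneg (by positivity); linarith
  have t2 : (0:ℚ) ≤ (u-1)*(q*u-1) := by
    apply mul_nonneg <;> nlinarith
  have t3 : (0:ℚ) ≤ q*(q-1) := by nlinarith
  linarith

lemma psiMinus_exp1 (a : ℕ) : (2*a+2).choose 2 - 1 = 2*a*a + 3*a := by
  rw [Nat.choose_two_right]
  have h : (2*a+2)*(2*a+2-1) = (2*a*a+3*a+1)*2 := by
    have : 2*a+2-1 = 2*a+1 := by omega
    rw [this]; ring
  rw [h, Nat.mul_div_cancel _ (by norm_num)]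
  omega

lemma psiMinus_step (Q u P E : ℚ) (hQ : 2 ≤ Q) (hu : Q^2 ≤ u) (hE : 0 ≤ E)
    (ih : P * ((u*Q^2 - 1)/(Q^2 - 1)) ≥ E * (1 - 1/Q - 1/Q^3 + (Q^2-Q+1)/(u*Q^3))) :
    P * (u*Q - 1) * (u*Q^2 - 1) * ((u*Q^4 - 1)/(Q^2 - 1)) ≥
    E * (u^2*Q^5) * (1 - 1/Q - 1/Q^3 + (Q^2-Q+1)/(u*Q^5)) := by
  have hQ0 : (0:ℚ) < Q := by linarith
  have hQne : Q ≠ 0 := ne_of_gt hQ0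
  have hQ2 : (Q^2 - 1) ≠ 0 := by nlinarith
  have hu4 : (4:ℚ) ≤ u := by nlinarith
  have hu0 : (0:ℚ) < u := by linarith
  have hune : u ≠ 0 := ne_of_gt hu0
  have hQ4 : (16:ℚ) ≤ Q^4 := by nlinarith [sq_nonneg (Q^2 - 4), sq_nonneg Q]
  set S0 : ℚ := 1 - 1/Q - 1/Q^3 + (Q^2-Q+1)/(u*Q^3) with hS0
  set S1 : ℚ := 1 - 1/Q - 1/Q^3 + (Q^2-Q+1)/(u*Q^5) with hS1
  set M : ℚ := (u*Q-1)*(u*Q^4-1) with hM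
  have hMnn : (0:ℚ) ≤ M := by
    apply mul_nonneg <;> nlinarith
  have hA : S0 * M = (Q^3*u - Q^2*u - u + Q^2 - Q + 1)*((Q*u-1)*(Q^4*u-1)) / (u*Q^3) := by
    rw [hS0, hM]; field_simp; ring
  have hB : u^2*Q^5*S1 = u*(Q^5*u - Q^4*u - Q^2*u + Q^2 - Q + 1) := by
    rw [hS1]; field_simp; ring
  have hcore : u^2*Q^5*S1 ≤ S0 * M := by
    rw [hA, hB, le_div_iff₀ (by positivity)]
    calc u*(Q^5*u - Q^4*u - Q^2*u + Q^2 - Q + 1)*(u*Q^3)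
        = Q^3*u^2*(Q^5*u - Q^4*u - Q^2*u + Q^2 - Q + 1) := by ring
      _ ≤ _ := psiMinus_key Q u hQ hu
  have hihM : (E*S0)*M ≤ (P * ((u*Q^2 - 1)/(Q^2 - 1)))*M :=
    mul_le_mul_of_nonneg_right ih hMnn
  calc E * (u^2*Q^5) * S1 = E*(u^2*Q^5*S1) := by ring
    _ ≤ E*(S0*M) := mul_le_mul_of_nonneg_left hcore hE
    _ = (E*S0)*M := by ring
    _ ≤ (P * ((u*Q^2 - 1)/(Q^2 - 1)))*M := hihM
    _ = P * (u*Q - 1) * (u*Q^2 - 1) * ((u*Q^4 - 1)/(Q^2 - 1)) := by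
        rw [hM]; field_simp

theorem psiMinus_lower_bound_even (q a : ℕ) (hq : 2 ≤ q) (ha : 1 ≤ a) :
    psiMinus (q : ℚ) 1 (2 * a) * (((q : ℚ) ^ (2 * a + 2) - 1) / ((q : ℚ) ^ 2 - 1)) ≥
      (q : ℚ) ^ ((2 * a + 2).choose 2 - 1) *
        (1 - 1 / (q : ℚ) - 1 / (q : ℚ) ^ 3 +
          ((q : ℚ) ^ 2 - (q : ℚ) + 1) / (q : ℚ) ^ (2 * a + 3)) := by
  have hQ : (2:ℚ) ≤ (q:ℚ) := by exact_mod_cast hq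
  have hQ0 : (0:ℚ) < (q:ℚ) := by linarith
  have hQne : ((q:ℚ)) ≠ 0 := ne_of_gt hQ0
  have hQ2 : ((q:ℚ)^2 - 1) ≠ 0 := by nlinarith
  induction a, ha using Nat.le_induction with
  | base =>
    have hicc : psiMinus (q:ℚ) 1 (2*1) = ((q:ℚ)^1 - 1) * ((q:ℚ)^2 - 1) := by
      show ∏ k ∈ Finset.Icc 1 2, ((q:ℚ)^k - 1) = _
      rw [show Finset.Icc 1 2 = {1, 2} from rfl, Finset.prod_pair (by norm_num)]
    rw [hicc, psiMinus_exp1 1]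
    norm_num
    apply le_of_eq
    field_simp
    ring
  | succ a ha ih =>
    have hpsi : psiMinus (q:ℚ) 1 (2*(a+1)) =
        psiMinus (q:ℚ) 1 (2*a) * ((q:ℚ)^(2*a+1) - 1) * ((q:ℚ)^(2*a+2) - 1) := by
      show ∏ k ∈ Finset.Icc 1 (2*(a+1)), ((q:ℚ)^k - 1) = _
      rw [show 2*(a+1) = (2*a+1)+1 from by ring,
        Finset.prod_Icc_succ_top (by omega), Finset.prod_Icc_succ_top (by omega)]
      rfl
    rw [hpsi, psiMinus_exp1 (a+1)]
    rw [psiMinus_exp1 a] at ih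
    have hu2 : (q:ℚ)^2 ≤ (q:ℚ)^(2*a) := pow_le_pow_right₀ (by linarith) (by omega)
    have e1 : (q:ℚ)^(2*(a+1)+2) = (q:ℚ)^(2*a)*(q:ℚ)^4 := by
      rw [show 2*(a+1)+2 = 2*a+4 from by ring, pow_add]
    have e2 : (q:ℚ)^(2*(a+1)+3) = (q:ℚ)^(2*a)*(q:ℚ)^5 := by
      rw [show 2*(a+1)+3 = 2*a+5 from by ring, pow_add]
    have e3 : (q:ℚ)^(2*(a+1)*(a+1)+3*(a+1))
        = (q:ℚ)^(2*a*a+3*a)*(((q:ℚ)^(2*a))^2*(q:ℚ)^5) := by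
      rw [show 2*(a+1)*(a+1)+3*(a+1) = (2*a*a+3*a) + (2*a + (2*a + 5)) from by ring,
        pow_add, pow_add, pow_add]
      ring
    have e4 : (q:ℚ)^(2*a+1) = (q:ℚ)^(2*a)*(q:ℚ) := by rw [pow_add]; ring
    have e5 : (q:ℚ)^(2*a+2) = (q:ℚ)^(2*a)*(q:ℚ)^2 := by rw [pow_add]
    have e6 : (q:ℚ)^(2*a+3) = (q:ℚ)^(2*a)*(q:ℚ)^3 := by rw [pow_add]
    rw [e1, e2, e3, e4, e5]
    rw [e5, e6] at ih
    exact psiMinus_step (q:ℚ) ((q:ℚ)^(2*a)) (psiMinus (q:ℚ) 1 (2*a)) ((q:ℚ)^(2*a*a+3*a))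
      hQ hu2 (by positivity) ih
end

section
/- Let q ≥ 2 be an integer and let a, b be integers with a ≥ 2 and b ≥ 0. Then φ⁻_{b+1,b+a}(q) ≤ q^(ab + binom(a+1,2)) · (1 + (−1)^b · q^(−b−a) · (q^a − (−1)^a)/(q+1) − q^(−2b−a−1)). -/
/-- `φ⁻_{a,b}(q) = ∏_{k=a}^{b} (q^k − (−1)^k)`, the empty product (b = a−1) being 1. -/
def phiMinus (q : ℚ) (a b : ℕ) : ℚ := ∏ k ∈ Finset.Icc a b, (q ^ k - (-1) ^ k)

private lemma negOnePow_pm (k : ℕ) : ((-1:ℚ))^k = 1 ∨ ((-1:ℚ))^k = -1 := by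
  rcases Nat.even_or_odd k with h | h
  · exact Or.inl h.neg_one_pow
  · exact Or.inr h.neg_one_pow

private lemma negOnePow_le_one (k : ℕ) : ((-1:ℚ))^k ≤ 1 := by
  rcases negOnePow_pm k with h | h <;> rw [h] <;> norm_num

private lemma step_ineq (q u v ε δ : ℚ) (hq : 2 ≤ q) (hu : 1 ≤ u) (hv : q^2 ≤ v)
    (hε : ε = 1 ∨ ε = -1) (hδ : δ = 1 ∨ δ = -1) :
    q * (((q+1)*(u^2*v*q - 1) + ε*u*q*(v - δ)) * (u*v*q + ε*δ)) ≤
      u*v*q * ((q+1)*(u^2*v*q^2 - 1) + ε*u*q*(v*q + δ)) := by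
  have hq0 : (0:ℚ) ≤ q := by linarith
  have hv' : (0:ℚ) < v := by nlinarith
  have huv : (q:ℚ)^2 ≤ u * v := le_trans hv (le_mul_of_one_le_left (le_of_lt hv') hu)
  have huq : q ≤ u * q := le_mul_of_one_le_left hq0 hu
  rcases hε with rfl | rfl <;> rcases hδ with rfl | rfl
  · have h : u*v*q * ((q+1)*(u^2*v*q^2 - 1) + 1*u*q*(v*q + 1))
        - q * (((q+1)*(u^2*v*q - 1) + 1*u*q*(v - 1)) * (u*v*q + 1*1))
        = q*((q+1)*(u*v)*(q-1) + u*q + (q+1) - (u*v)*q) := by ring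
    have hb : (0:ℚ) ≤ (q+1)*(u*v)*(q-1) + u*q + (q+1) - (u*v)*q := by
      nlinarith [mul_le_mul_of_nonneg_right huv (by nlinarith : (0:ℚ) ≤ q^2 - q - 1),
        mul_nonneg (mul_nonneg hq0 hq0) (by nlinarith : (0:ℚ) ≤ q^2 - q - 1)]
    nlinarith [mul_nonneg hq0 hb]
  · have h : u*v*q * ((q+1)*(u^2*v*q^2 - 1) + 1*u*q*(v*q + -1))
        - q * (((q+1)*(u^2*v*q - 1) + 1*u*q*(v - -1)) * (u*v*q + 1*-1))
        = q*((q+1)*(u*v)*(q-1) + u*q - (q+1) + (u*v)*q) := by ring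
    have hb : (0:ℚ) ≤ (q+1)*(u*v)*(q-1) + u*q - (q+1) + (u*v)*q := by
      nlinarith [mul_le_mul_of_nonneg_right huv (by nlinarith : (0:ℚ) ≤ q^2 + q - 1),
        mul_nonneg (mul_nonneg hq0 hq0) (by nlinarith : (0:ℚ) ≤ q^2 + q - 1)]
    nlinarith [mul_nonneg hq0 hb]
  · have h : u*v*q * ((q+1)*(u^2*v*q^2 - 1) + -1*u*q*(v*q + 1))
        - q * (((q+1)*(u^2*v*q - 1) + -1*u*q*(v - 1)) * (u*v*q + -1*1))
        = q*((q+1)*(u*v)*(q-1) + u*q - (q+1) - (u*v)*q) := by ring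
    have hb : (0:ℚ) ≤ (q+1)*(u*v)*(q-1) + u*q - (q+1) - (u*v)*q := by
      nlinarith [mul_le_mul_of_nonneg_right huv (by nlinarith : (0:ℚ) ≤ q^2 - q - 1), huq,
        (by nlinarith [mul_nonneg (by linarith : (0:ℚ) ≤ q-2) (by positivity : (0:ℚ) ≤ q^2*(q+1)),
            sq_nonneg (q-2)] : (1:ℚ) ≤ q^2*(q^2 - q - 1))]
    nlinarith [mul_nonneg hq0 hb]
  · have h : u*v*q * ((q+1)*(u^2*v*q^2 - 1) + -1*u*q*(v*q + -1))
        - q * (((q+1)*(u^2*v*q - 1) + -1*u*q*(v - -1)) * (u*v*q + -1*-1))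
        = q*((q+1)*(u*v)*(q-1) + u*q + (q+1) + (u*v)*q) := by ring
    have hb : (0:ℚ) ≤ (q+1)*(u*v)*(q-1) + u*q + (q+1) + (u*v)*q := by
      nlinarith [mul_le_mul_of_nonneg_right huv (by nlinarith : (0:ℚ) ≤ q^2 - q - 1),
        mul_nonneg (mul_nonneg hq0 hq0) (by nlinarith : (0:ℚ) ≤ q^2 - q - 1)]
    nlinarith [mul_nonneg hq0 hb]

private lemma key_lemma (q b : ℕ) (hq : 2 ≤ q) : ∀ a : ℕ, 2 ≤ a →
    ((q:ℚ)+1) * (q:ℚ)^(2*b+a+1) * ∏ k ∈ Finset.Icc (b+1) (b+a), ((q:ℚ)^k - (-1:ℚ)^k) ≤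
      (q:ℚ)^(a*b + (a+1).choose 2) *
        (((q:ℚ)+1)*((q:ℚ)^(2*b+a+1) - 1) + (-1:ℚ)^b * (q:ℚ)^(b+1) * ((q:ℚ)^a - (-1:ℚ)^a)) := by
  have hq1 : (1:ℚ) ≤ (q:ℚ) := by exact_mod_cast Nat.one_le_of_lt hq
  have hq2 : (2:ℚ) ≤ (q:ℚ) := by exact_mod_cast hq
  have hq0 : (0:ℚ) ≤ (q:ℚ) := by linarith
  have hE : ((-1:ℚ)^b)^2 = 1 := by
    rcases negOnePow_pm b with h | h <;> rw [h] <;> norm_num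
  intro a ha
  induction a, ha using Nat.le_induction with
  | base =>
    -- a = 2 : equality
    rw [show b+2 = (b+1)+1 from rfl,
      Finset.prod_Icc_succ_top (Nat.le_succ _), Finset.Icc_self, Finset.prod_singleton]
    have h3 : (2+1).choose 2 = 3 := rfl
    rw [h3]
    apply le_of_eq
    linear_combination (-(((q:ℚ)^b)^2 * (q:ℚ)^3 * ((q:ℚ)+1))) * hE
  | succ a ha IH =>
    have hch : (a+1+1).choose 2 = (a+1) + (a+1).choose 2 := by
      rw [Nat.choose_succ_succ, Nat.choose_one_right]
    have hexp : (a+1)*b + (a+1+1).choose 2 = a*b + (a+1).choose 2 + (b+a+1) := by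
      rw [hch]; ring
    rw [show b+(a+1) = (b+a)+1 from rfl,
      Finset.prod_Icc_succ_top (by omega : b+1 ≤ (b+a)+1), hexp]
    set P : ℚ := ∏ k ∈ Finset.Icc (b+1) (b+a), ((q:ℚ)^k - (-1:ℚ)^k) with hP
    have hfac : (0:ℚ) ≤ (q:ℚ)^(b+a+1) - (-1:ℚ)^(b+a+1) := by
      have h1 : (1:ℚ) ≤ (q:ℚ)^(b+a+1) := one_le_pow₀ hq1
      have h2 := negOnePow_le_one (b+a+1)
      linarith
    have hN0 : (0:ℚ) ≤ (q:ℚ)^(a*b + (a+1).choose 2) := by positivity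
    have hstep := step_ineq (q:ℚ) ((q:ℚ)^b) ((q:ℚ)^a) ((-1:ℚ)^b) ((-1:ℚ)^a) hq2
      (one_le_pow₀ hq1) (pow_le_pow_right₀ hq1 ha) (negOnePow_pm b) (negOnePow_pm a)
    calc ((q:ℚ)+1) * (q:ℚ)^(2*b+(a+1)+1) * (P * ((q:ℚ)^((b+a)+1) - (-1:ℚ)^((b+a)+1)))
        = (((q:ℚ)+1) * (q:ℚ)^(2*b+a+1) * P) * ((q:ℚ) * ((q:ℚ)^(b+a+1) - (-1:ℚ)^(b+a+1))) := by
          ring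
      _ ≤ ((q:ℚ)^(a*b + (a+1).choose 2) *
            (((q:ℚ)+1)*((q:ℚ)^(2*b+a+1) - 1) + (-1:ℚ)^b * (q:ℚ)^(b+1) * ((q:ℚ)^a - (-1:ℚ)^a)))
            * ((q:ℚ) * ((q:ℚ)^(b+a+1) - (-1:ℚ)^(b+a+1))) := by
          exact mul_le_mul_of_nonneg_right IH (mul_nonneg hq0 hfac)
      _ = (q:ℚ)^(a*b + (a+1).choose 2) *
            ((q:ℚ) * (((((q:ℚ)+1)*(((q:ℚ)^b)^2*((q:ℚ)^a)*(q:ℚ) - 1)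
              + ((-1:ℚ)^b)*((q:ℚ)^b)*(q:ℚ)*(((q:ℚ)^a) - (-1:ℚ)^a))
              * (((q:ℚ)^b)*((q:ℚ)^a)*(q:ℚ) + ((-1:ℚ)^b)*((-1:ℚ)^a))))) := by
          ring
      _ ≤ (q:ℚ)^(a*b + (a+1).choose 2) *
            (((q:ℚ)^b)*((q:ℚ)^a)*(q:ℚ) *
              (((q:ℚ)+1)*(((q:ℚ)^b)^2*((q:ℚ)^a)*(q:ℚ)^2 - 1)
                + ((-1:ℚ)^b)*((q:ℚ)^b)*(q:ℚ)*(((q:ℚ)^a)*(q:ℚ) + (-1:ℚ)^a))) := by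
          exact mul_le_mul_of_nonneg_left hstep hN0
      _ = (q:ℚ)^(a*b + (a+1).choose 2 + (b+a+1)) *
            (((q:ℚ)+1)*((q:ℚ)^(2*b+(a+1)+1) - 1)
              + (-1:ℚ)^b * (q:ℚ)^(b+1) * ((q:ℚ)^(a+1) - (-1:ℚ)^(a+1))) := by
          ring

theorem phiMinus_upper_bound (q a b : ℕ) (hq : 2 ≤ q) (ha : 2 ≤ a) :
    phiMinus (q : ℚ) (b + 1) (b + a) ≤
      (q : ℚ) ^ (a * b + (a + 1).choose 2) *
        (1 + (-1 : ℚ) ^ b * (q : ℚ) ^ (-(b : ℤ) - (a : ℤ)) *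
            (((q : ℚ) ^ a - (-1 : ℚ) ^ a) / ((q : ℚ) + 1)) -
          (q : ℚ) ^ (-2 * (b : ℤ) - (a : ℤ) - 1)) := by
  have hq0 : (0:ℚ) < (q:ℚ) := by exact_mod_cast Nat.lt_of_lt_of_le Nat.zero_lt_two hq
  have hqne : ((q:ℚ)) ≠ 0 := ne_of_gt hq0
  have hq1ne : ((q:ℚ)+1) ≠ 0 := by positivity
  have hz1 : (q:ℚ)^(-(b:ℤ)-(a:ℤ)) = ((q:ℚ)^(b+a))⁻¹ := by
    rw [show -(b:ℤ)-(a:ℤ) = -(((b+a : ℕ)):ℤ) by push_cast; ring, zpow_neg, zpow_natCast]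
  have hz2 : (q:ℚ)^(-2*(b:ℤ)-(a:ℤ)-1) = ((q:ℚ)^(2*b+a+1))⁻¹ := by
    rw [show -2*(b:ℤ)-(a:ℤ)-1 = -(((2*b+a+1 : ℕ)):ℤ) by push_cast; ring, zpow_neg, zpow_natCast]
  have hB : 1 + (-1:ℚ)^b * ((q:ℚ)^(b+a))⁻¹ * (((q:ℚ)^a - (-1:ℚ)^a)/((q:ℚ)+1))
      - ((q:ℚ)^(2*b+a+1))⁻¹
      = (((q:ℚ)+1)*((q:ℚ)^(2*b+a+1) - 1) + (-1:ℚ)^b * (q:ℚ)^(b+1) * ((q:ℚ)^a - (-1:ℚ)^a))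
        / (((q:ℚ)+1) * (q:ℚ)^(2*b+a+1)) := by
    field_simp
    ring
  rw [hz1, hz2, hB, ← mul_div_assoc, le_div_iff₀ (by positivity)]
  calc phiMinus (q:ℚ) (b+1) (b+a) * (((q:ℚ)+1) * (q:ℚ)^(2*b+a+1))
      = ((q:ℚ)+1) * (q:ℚ)^(2*b+a+1) * ∏ k ∈ Finset.Icc (b+1) (b+a), ((q:ℚ)^k - (-1:ℚ)^k) := by
        rw [phiMinus]; ring
    _ ≤ _ := key_lemma q b hq a ha
end

section
/- Let q ≥ 2 be an integer and let a, b be integers with a ≥ 2 and b ≥ 0. Then φ⁻_{b+1,b+a}(q) ≥ q^(ab + binom(a+1,2)) · (1 + (−1)^b · q^(−b−1) − (−1)^b · q^(−b−2) − q^(−b−3) − q^(−2b−3)). -/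
open Finset

section
variable {K : Type*} [Field K] [LinearOrder K] [IsStrictOrderedRing K] {x : K}

lemma one_le_one_add_pow_mul_one_sub_pow_succ (hx0 : 0 ≤ x) (hx : x ≤ 1 / 2) (m : ℕ) :
    1 ≤ (1 + x ^ m) * (1 - x ^ (m + 1)) := by
  have hxm : x ^ (m + 1) ≤ x := pow_le_of_le_one hx0 (by linarith) (by omega)
  have hgap : 0 ≤ x ^ m * (1 - x - x ^ (m + 1)) :=
    mul_nonneg (pow_nonneg hx0 m) (by linarith)
  linear_combination hgap

lemma le_prod_Icc_one_sub_neg_pow (hx0 : 0 ≤ x) (hx : x ≤ 1 / 2) (m n : ℕ) :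
    (if Even m then 1 - x ^ m else 1) ≤ ∏ k ∈ Icc m n, (1 - (-x) ^ k) := by
  have hx1 : x ≤ 1 := by linarith
  induction h : n + 1 - m generalizing m with
  | zero =>
    rw [Icc_eq_empty (by omega), prod_empty]
    split_ifs <;> simp [pow_nonneg hx0]
  | succ d ih =>
    rw [← insert_Icc_add_one_left_eq_Icc (by omega : m ≤ n), prod_insert (by simp)]
    have ih := ih (m + 1) (by omega)
    rcases Nat.even_or_odd m with hm | hm
    · rw [if_neg (Nat.not_even_iff_odd.mpr hm.add_one)] at ih
      rw [if_pos hm, hm.neg_pow]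
      exact le_mul_of_one_le_right (by linarith [pow_le_one₀ hx0 hx1 (n := m)]) ih
    · rw [if_pos hm.add_one] at ih
      rw [if_neg (Nat.not_even_iff_odd.mpr hm), hm.neg_pow, sub_neg_eq_add]
      calc (1 : K) ≤ (1 + x ^ m) * (1 - x ^ (m + 1)) :=
            one_le_one_add_pow_mul_one_sub_pow_succ hx0 hx m
        _ ≤ _ := mul_le_mul_of_nonneg_left ih (by positivity)

lemma le_prod_Icc_one_sub_neg_pow_of_lt (hx0 : 0 ≤ x) (hx : x ≤ 1 / 2) {m n : ℕ} (hmn : m < n) :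
    (1 - (-x) ^ m) * (1 - (-x) ^ (m + 1)) - x ^ (m + 2) ≤ ∏ k ∈ Icc m n, (1 - (-x) ^ k) := by
  have hx1 : x ≤ 1 := by linarith
  rw [← insert_Icc_add_one_left_eq_Icc hmn.le, prod_insert (by simp),
    ← insert_Icc_add_one_left_eq_Icc hmn, prod_insert (by simp), ← mul_assoc,
    show m + 1 + 1 = m + 2 by rfl]
  have htail := le_prod_Icc_one_sub_neg_pow hx0 hx (m + 2) n
  set F := (1 - (-x) ^ m) * (1 - (-x) ^ (m + 1))
  have hx2 : 0 ≤ x ^ (m + 2) := pow_nonneg hx0 _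
  rcases Nat.even_or_odd m with hm | hm
  · rw [if_pos (hm.add even_two)] at htail
    have hF : 0 ≤ F ∧ F ≤ 1 := by
      simp only [F, hm.neg_pow, hm.add_one.neg_pow, sub_neg_eq_add]
      have hpow : x ^ (m + 1) ≤ x ^ m := pow_le_pow_of_le_one hx0 hx1 (by omega)
      exact ⟨mul_nonneg (by linarith [pow_le_one₀ hx0 hx1 (n := m)]) (by positivity),
        by nlinarith [mul_nonneg (pow_nonneg hx0 m) (pow_nonneg hx0 (m + 1))]⟩
    nlinarith [mul_le_mul_of_nonneg_left htail hF.1]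
  · rw [if_neg (Nat.not_even_iff_odd.mpr (hm.add_even even_two))] at htail
    have hF : 0 ≤ F := by
      simp only [F, hm.neg_pow, hm.add_one.neg_pow]
      nlinarith [pow_le_one₀ hx0 hx1 (n := m + 1), pow_nonneg hx0 m]
    nlinarith [mul_le_mul_of_nonneg_left htail hF]

end

lemma phiMinus_eq_pow_sum_mul_prod {q : ℚ} (hq : q ≠ 0) (a b : ℕ) :
    phiMinus q a b = q ^ (∑ k ∈ Icc a b, k) * ∏ k ∈ Icc a b, (1 - (-q⁻¹) ^ k) := by
  rw [phiMinus, ← prod_pow_eq_pow_sum, ← prod_mul_distrib]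
  refine prod_congr rfl fun k _ => ?_
  rw [neg_pow q⁻¹, inv_pow, mul_sub, mul_one, mul_left_comm, mul_inv_cancel₀ (pow_ne_zero k hq),
    mul_one]

lemma sum_Icc_add_one_add (a b : ℕ) :
    ∑ k ∈ Icc (b + 1) (b + a), k = a * b + (a + 1).choose 2 := by
  induction a with
  | zero => simp
  | succ n ih =>
    rw [← add_assoc, sum_Icc_succ_top (by omega), ih, Nat.choose_succ_succ (n + 1) 1,
      Nat.choose_one_right]
    ring

theorem phiMinus_lower_bound (q a b : ℕ) (hq : 2 ≤ q) (ha : 2 ≤ a) :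
    phiMinus (q : ℚ) (b + 1) (b + a) ≥
      (q : ℚ) ^ (a * b + (a + 1).choose 2) *
        (1 + (-1 : ℚ) ^ b * (q : ℚ) ^ (-(b : ℤ) - 1) -
          (-1 : ℚ) ^ b * (q : ℚ) ^ (-(b : ℤ) - 2) -
          (q : ℚ) ^ (-(b : ℤ) - 3) - (q : ℚ) ^ (-2 * (b : ℤ) - 3)) := by
  have hq2 : (2 : ℚ) ≤ q := by exact_mod_cast hq
  set x := (q : ℚ)⁻¹
  have hx0 : 0 ≤ x := by positivity
  have hx : x ≤ 1 / 2 := by rw [one_div]; exact inv_anti₀ two_pos hq2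
  have hzpow (k : ℕ) : (q : ℚ) ^ (-(k : ℤ)) = x ^ k := by rw [zpow_neg, zpow_natCast, inv_pow]
  have hbracket : 1 + (-1 : ℚ) ^ b * (q : ℚ) ^ (-(b : ℤ) - 1) -
      (-1 : ℚ) ^ b * (q : ℚ) ^ (-(b : ℤ) - 2) - (q : ℚ) ^ (-(b : ℤ) - 3) -
      (q : ℚ) ^ (-2 * (b : ℤ) - 3) =
      (1 - (-x) ^ (b + 1)) * (1 - (-x) ^ (b + 1 + 1)) - x ^ (b + 1 + 2) := by
    have hsq : ((-1 : ℚ) ^ b) ^ 2 = 1 := by rw [← pow_mul, pow_mul', neg_one_sq, one_pow]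
    rw [show -(b : ℤ) - 1 = -((b + 1 : ℕ) : ℤ) by push_cast; ring,
      show -(b : ℤ) - 2 = -((b + 2 : ℕ) : ℤ) by push_cast; ring,
      show -(b : ℤ) - 3 = -((b + 3 : ℕ) : ℤ) by push_cast; ring,
      show -2 * (b : ℤ) - 3 = -((2 * b + 3 : ℕ) : ℤ) by push_cast; ring,
      hzpow, hzpow, hzpow, hzpow, neg_pow x, neg_pow x]
    linear_combination x ^ (2 * b + 3) * hsq
  rw [phiMinus_eq_pow_sum_mul_prod (by positivity), sum_Icc_add_one_add, hbracket, ge_iff_le]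
  exact mul_le_mul_of_nonneg_left (le_prod_Icc_one_sub_neg_pow_of_lt hx0 hx (by omega))
    (by positivity)
end

section
/- Let q ≥ 2 be an integer and a ≥ 2 an integer. Then φ⁺_{1,a}(q) ≥ q^(binom(a+1,2)) · (1 − 1/q + 1/q² − 2/q³). -/
/-- `φ⁺_{a,b}(q) = ∏_{k=a}^{b} (q^k + (−1)^k)`, the empty product (b = a−1) being 1. -/
def phiPlus (q : ℚ) (a b : ℕ) : ℚ := ∏ k ∈ Finset.Icc a b, (q ^ k + (-1) ^ k)

/-!
With `x = 1/q` one has `φ⁺_{1,a}(q) = q^(binom(a+1,2)) · ∏_{k=1}^{a} (1 + (-x)^k)`, and the first two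
factors give `(1 - x)(1 + x²) = 1 - x + x² - x³`. In the remaining product the even factors are at
least `1` and the odd ones are `1 - x^k`, so by the Weierstrass product inequality it is at least
`1 - S` with `S = ∑_{k ≥ 3 odd} x^k ≤ x³ / (1 - x²)`. As `(1 - x)(1 + x²) ≤ 1 - x²`, multiplying by
the first two factors costs at most a further `x³`.
-/

open Finset

section OrderedRing

variable {R : Type*} [CommRing R] [LinearOrder R] [IsStrictOrderedRing R]

theorem Finset.one_sub_sum_le_prod_one_sub {ι : Type*} (s : Finset ι) {f : ι → R}
    (h0 : ∀ i ∈ s, 0 ≤ f i) (h1 : ∀ i ∈ s, f i ≤ 1) :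
    1 - ∑ i ∈ s, f i ≤ ∏ i ∈ s, (1 - f i) := by
  classical
  induction s using Finset.induction_on with
  | empty => simp
  | insert a s ha ih =>
    rw [sum_insert ha, prod_insert ha]
    have hfa : 0 ≤ 1 - f a := sub_nonneg.2 (h1 a (mem_insert_self a s))
    have hsum : 0 ≤ ∑ i ∈ s, f i := sum_nonneg fun i hi => h0 i (mem_insert_of_mem hi)
    calc 1 - (f a + ∑ i ∈ s, f i) ≤ (1 - f a) * (1 - ∑ i ∈ s, f i) := by
          nlinarith [mul_nonneg (h0 a (mem_insert_self a s)) hsum]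
      _ ≤ (1 - f a) * ∏ i ∈ s, (1 - f i) :=
          mul_le_mul_of_nonneg_left (ih (fun i hi => h0 i (mem_insert_of_mem hi))
            fun i hi => h1 i (mem_insert_of_mem hi)) hfa

theorem prod_filter_odd_one_sub_pow_le {x : R} (hx0 : 0 ≤ x) (hx1 : x ≤ 1) (s : Finset ℕ) :
    ∏ k ∈ s with Odd k, (1 - x ^ k) ≤ ∏ k ∈ s, (1 + (-x) ^ k) := by
  rw [← prod_filter_mul_prod_filter_not s Odd]
  have h_odd : ∏ k ∈ s with Odd k, (1 + (-x) ^ k) = ∏ k ∈ s with Odd k, (1 - x ^ k) :=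
    prod_congr rfl fun k hk => by rw [(mem_filter.1 hk).2.neg_pow, sub_eq_add_neg]
  have h_even : 1 ≤ ∏ k ∈ s with ¬Odd k, (1 + (-x) ^ k) := by
    refine one_le_prod fun k hk => ?_
    rw [(Nat.not_odd_iff_even.1 (mem_filter.1 hk).2).neg_pow]
    exact le_add_of_nonneg_right (pow_nonneg hx0 k)
  rw [h_odd]
  refine le_mul_of_one_le_right (prod_nonneg fun k _ => ?_) h_even
  exact sub_nonneg.2 (pow_le_one₀ hx0 hx1)

theorem one_sub_sq_mul_sum_odd_pow_le {x : R} (hx0 : 0 ≤ x) (hx1 : x ≤ 1) (n : ℕ) :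
    (1 - x ^ 2) * ∑ k ∈ Icc 3 n with Odd k, x ^ k ≤ x ^ 3 := by
  have h_sub : {k ∈ Icc 3 n | Odd k} ⊆ (range n).image (fun j => 2 * j + 3) := by
    intro k hk
    obtain ⟨⟨h3, hn⟩, j, rfl⟩ := by simpa only [mem_filter, mem_Icc] using hk
    exact mem_image.2 ⟨j - 1, mem_range.2 (by omega), by omega⟩
  have h_geom : ∑ j ∈ range n, x ^ (2 * j + 3) = x ^ 3 * ∑ j ∈ range n, (x ^ 2) ^ j := by
    rw [mul_sum]
    exact sum_congr rfl fun j _ => by ring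
  calc (1 - x ^ 2) * ∑ k ∈ Icc 3 n with Odd k, x ^ k
      ≤ (1 - x ^ 2) * ∑ j ∈ range n, x ^ (2 * j + 3) := by
        refine mul_le_mul_of_nonneg_left ?_ (sub_nonneg.2 (pow_le_one₀ hx0 hx1))
        refine (sum_le_sum_of_subset_of_nonneg h_sub fun k _ _ => pow_nonneg hx0 k).trans_eq ?_
        exact sum_image fun i _ j _ h => by omega
    _ = x ^ 3 * (1 - (x ^ 2) ^ n) := by rw [h_geom, mul_left_comm, mul_neg_geom_sum]
    _ ≤ x ^ 3 := mul_le_of_le_one_right (pow_nonneg hx0 3) (sub_le_self _ (by positivity))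

theorem one_sub_add_sq_sub_two_mul_cube_le_prod {x : R} (hx0 : 0 ≤ x) (hx1 : x ≤ 1) {n : ℕ}
    (hn : 2 ≤ n) : 1 - x + x ^ 2 - 2 * x ^ 3 ≤ ∏ k ∈ Icc 1 n, (1 + (-x) ^ k) := by
  rw [← Ico_add_one_right_eq_Icc,
    ← prod_Ico_consecutive _ (by norm_num : 1 ≤ 3) (by omega : 3 ≤ n + 1), Ico_add_one_right_eq_Icc]
  have h_head : ∏ k ∈ Ico 1 3, (1 + (-x) ^ k) = (1 - x) * (1 + x ^ 2) := by
    rw [prod_Ico_succ_top (by norm_num), prod_Ico_succ_top (by norm_num), Ico_self, prod_empty]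
    ring
  set S := ∑ k ∈ Icc 3 n with Odd k, x ^ k
  have hS0 : 0 ≤ S := sum_nonneg fun k _ => pow_nonneg hx0 k
  have hS : (1 - x ^ 2) * S ≤ x ^ 3 := one_sub_sq_mul_sum_odd_pow_le hx0 hx1 n
  have h_tail : 1 - S ≤ ∏ k ∈ Icc 3 n, (1 + (-x) ^ k) :=
    (one_sub_sum_le_prod_one_sub _ (fun k _ => pow_nonneg hx0 k)
      fun k _ => pow_le_one₀ hx0 hx1).trans (prod_filter_odd_one_sub_pow_le hx0 hx1 _)
  have h_head0 : 0 ≤ (1 - x) * (1 + x ^ 2) := mul_nonneg (sub_nonneg.2 hx1) (by positivity)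
  have h_head_le : (1 - x) * (1 + x ^ 2) ≤ 1 - x ^ 2 := by
    linear_combination mul_nonneg hx0 (sq_nonneg (1 - x))
  rw [h_head]
  calc 1 - x + x ^ 2 - 2 * x ^ 3 ≤ (1 - x) * (1 + x ^ 2) - (1 - x ^ 2) * S := by
        linear_combination hS
    _ ≤ (1 - x) * (1 + x ^ 2) * (1 - S) := by
        linear_combination mul_le_mul_of_nonneg_right h_head_le hS0
    _ ≤ _ := mul_le_mul_of_nonneg_left h_tail h_head0

end OrderedRing

theorem sum_Icc_id_eq_choose_two (n : ℕ) : ∑ k ∈ Icc 1 n, k = (n + 1).choose 2 := by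
  rw [Nat.choose_two_right, ← sum_range_id, Nat.range_succ_eq_Icc_zero,
    Icc_eq_cons_Ioc n.zero_le, sum_cons, zero_add, ← Icc_add_one_left_eq_Ioc, zero_add]

theorem phiPlus_eq_pow_mul_prod {q : ℚ} (hq : q ≠ 0) (m n : ℕ) :
    phiPlus q m n = q ^ (∑ k ∈ Icc m n, k) * ∏ k ∈ Icc m n, (1 + (-q⁻¹) ^ k) := by
  rw [phiPlus, ← prod_pow_eq_pow_sum, ← prod_mul_distrib]
  refine prod_congr rfl fun k _ => ?_
  rw [neg_pow q⁻¹, inv_pow]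
  field_simp

theorem phiPlus_lower_bound (q a : ℕ) (hq : 2 ≤ q) (ha : 2 ≤ a) :
    phiPlus (q : ℚ) 1 a ≥
      (q : ℚ) ^ ((a + 1).choose 2) *
        (1 - 1 / (q : ℚ) + 1 / (q : ℚ) ^ 2 - 2 / (q : ℚ) ^ 3) := by
  have hq1 : (1 : ℚ) ≤ q := by exact_mod_cast (by omega : 1 ≤ q)
  have hx0 : (0 : ℚ) ≤ (q : ℚ)⁻¹ := by positivity
  have hx1 : (q : ℚ)⁻¹ ≤ 1 := inv_le_one_of_one_le₀ hq1
  rw [phiPlus_eq_pow_mul_prod (by positivity), sum_Icc_id_eq_choose_two, ge_iff_le]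
  refine mul_le_mul_of_nonneg_left ?_ (by positivity)
  convert one_sub_add_sq_sub_two_mul_cube_le_prod hx0 hx1 ha using 1
  simp only [div_eq_mul_inv, one_mul, inv_pow]
end

section
/- Let q ≥ 2 be an integer and let j, k, m be integers with 0 ≤ m ≤ j−1 and 2 ≤ j ≤ k. Then φ⁺_{1,j−m}(q) · [j choose m]_q⁻ · q^(binom(m,2) − mk) ≥ φ⁺_{1,j−m−1}(q) · [j choose m+1]_q⁻ · q^(binom(m+1,2) − (m+1)k). -/
/-- The variant Gaussian coefficient `[b choose a]_q⁻ = φ⁻_{b−a+1,b}(q)/φ⁻_{1,a}(q)`,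
set to 0 if `b < a` (the case `a < 0` cannot occur for natural `a`). -/
def gaussMinus (q : ℚ) (b a : ℕ) : ℚ :=
  if a ≤ b then phiMinus q (b - a + 1) b / phiMinus q 1 a else 0

lemma aux_two_le_pow {q : ℚ} (hq : 2 ≤ q) {n : ℕ} (hn : 1 ≤ n) : 2 ≤ q ^ n := by
  calc (2:ℚ) ≤ q := hq
    _ = q ^ 1 := (pow_one q).symm
    _ ≤ q ^ n := pow_le_pow_right₀ (by linarith) hn

lemma aux_sign_bounds (n : ℕ) : -1 ≤ ((-1:ℚ)) ^ n ∧ ((-1:ℚ)) ^ n ≤ 1 := by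
  rcases neg_one_pow_eq_or ℚ n with h | h <;> rw [h] <;> norm_num

lemma phiMinus_pos {q : ℚ} (hq : 2 ≤ q) {a b : ℕ} (ha : 1 ≤ a) : 0 < phiMinus q a b := by
  refine Finset.prod_pos fun i hi => ?_
  have hi1 : 1 ≤ i := le_trans ha (Finset.mem_Icc.mp hi).1
  have h2 := aux_two_le_pow hq hi1
  have h3 := aux_sign_bounds i
  linarith [h3.1, h3.2]

lemma phiPlus_pos {q : ℚ} (hq : 2 ≤ q) {a b : ℕ} (ha : 1 ≤ a) : 0 < phiPlus q a b := by
  refine Finset.prod_pos fun i hi => ?_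
  have hi1 : 1 ≤ i := le_trans ha (Finset.mem_Icc.mp hi).1
  have h2 := aux_two_le_pow hq hi1
  have h3 := aux_sign_bounds i
  linarith [h3.1, h3.2]

lemma phiMinus_bot {q : ℚ} {a b : ℕ} (h : a ≤ b) :
    phiMinus q a b = (q ^ a - (-1) ^ a) * phiMinus q (a + 1) b := by
  rw [phiMinus, phiMinus, Finset.Icc_eq_cons_Ioc h, Finset.prod_cons, Finset.Icc_add_one_left_eq_Ioc]

lemma phiMinus_succ_top (q : ℚ) (m : ℕ) :
    phiMinus q 1 (m + 1) = phiMinus q 1 m * (q ^ (m + 1) - (-1) ^ (m + 1)) := by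
  rw [phiMinus, phiMinus, Finset.prod_Icc_succ_top (by omega)]

lemma phiPlus_top {q : ℚ} {n : ℕ} (hn : 1 ≤ n) :
    phiPlus q 1 n = phiPlus q 1 (n - 1) * (q ^ n + (-1) ^ n) := by
  obtain ⟨p, rfl⟩ : ∃ p, n = p + 1 := ⟨n - 1, by omega⟩
  rw [phiPlus, phiPlus, Nat.add_sub_cancel, Finset.prod_Icc_succ_top (by omega)]

theorem summand_bound (q j k m : ℕ) (hq : 2 ≤ q) (hm : m ≤ j - 1) (hj : 2 ≤ j)
    (hjk : j ≤ k) :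
    phiPlus (q : ℚ) 1 (j - m) * gaussMinus (q : ℚ) j m *
        (q : ℚ) ^ ((m.choose 2 : ℤ) - (m : ℤ) * (k : ℤ)) ≥
      phiPlus (q : ℚ) 1 (j - m - 1) * gaussMinus (q : ℚ) j (m + 1) *
        (q : ℚ) ^ (((m + 1).choose 2 : ℤ) - ((m : ℤ) + 1) * (k : ℤ)) := by
  have hq2 : (2:ℚ) ≤ (q:ℚ) := by exact_mod_cast hq
  have hqne : (q:ℚ) ≠ 0 := by positivity
  have hmj : m + 1 ≤ j := by omega
  have ha1 : 1 ≤ j - m := by omega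
  have hc1 : 1 ≤ k - m := by omega
  -- exponent arithmetic
  have hexp : ((m.choose 2 : ℤ) - (m : ℤ) * (k : ℤ)) =
      (((m + 1).choose 2 : ℤ) - ((m : ℤ) + 1) * (k : ℤ)) + ((k - m : ℕ) : ℤ) := by
    have hch : (m + 1).choose 2 = m.choose 1 + m.choose 2 := Nat.choose_succ_succ m 1
    have hc1' : m.choose 1 = m := Nat.choose_one_right m
    have hkm : ((k - m : ℕ) : ℤ) = (k : ℤ) - (m : ℤ) := by
      have : m ≤ k := by omega
      omega
    rw [hkm, hch, hc1']
    push_cast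
    ring
  rw [ge_iff_le, hexp, zpow_add₀ hqne, zpow_natCast]
  -- unfold gaussMinus
  rw [gaussMinus, gaussMinus, if_pos (by omega : m ≤ j), if_pos hmj]
  have hidx : j - (m + 1) + 1 = j - m := by omega
  rw [hidx]
  rw [phiMinus_bot (show j - m ≤ j by omega), phiMinus_succ_top]
  rw [phiPlus_top ha1]
  set P := phiPlus (q:ℚ) 1 (j - m - 1) with hP
  set A := phiMinus (q:ℚ) (j - m + 1) j with hA
  set D := phiMinus (q:ℚ) 1 m with hD
  set X := (q:ℚ) ^ (j - m) + (-1:ℚ) ^ (j - m) with hX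
  set Y := (q:ℚ) ^ (j - m) - (-1:ℚ) ^ (j - m) with hY
  set Z := (q:ℚ) ^ (m + 1) - (-1:ℚ) ^ (m + 1) with hZ
  set QC := (q:ℚ) ^ (k - m) with hQC
  set QE := (q:ℚ) ^ (((m + 1).choose 2 : ℤ) - ((m : ℤ) + 1) * (k : ℤ)) with hQE
  -- positivity facts
  have hPpos : 0 < P := phiPlus_pos hq2 (by omega)
  have hApos : 0 < A := phiMinus_pos hq2 (by omega)
  have hDpos : 0 < D := phiMinus_pos hq2 (by omega)
  have hQEpos : 0 < QE := zpow_pos (by positivity) _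
  have hpow2 : (2:ℚ) ≤ (q:ℚ) ^ (j - m) := aux_two_le_pow hq2 ha1
  have hQC2 : (2:ℚ) ≤ QC := aux_two_le_pow hq2 hc1
  have hsgn := aux_sign_bounds (j - m)
  have hXpos : 0 < X := by rw [hX]; linarith [hsgn.1]
  have hZ3 : (3:ℚ) ≤ Z := by
    rcases Nat.eq_zero_or_pos m with h0 | h1
    · subst h0; rw [hZ]; norm_num; linarith
    · have h4 : (4:ℚ) ≤ (q:ℚ) ^ (m + 1) := by
        calc (4:ℚ) = 2 * 2 := by norm_num
          _ ≤ (q:ℚ) * (q:ℚ) := by nlinarith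
          _ = (q:ℚ) ^ 2 := by ring
          _ ≤ (q:ℚ) ^ (m + 1) := pow_le_pow_right₀ (by linarith) (by omega)
      have hs := aux_sign_bounds (m + 1)
      rw [hZ]; linarith [hs.2]
  have hZpos : 0 < Z := by linarith
  -- key inequality
  have hK : Y ≤ X * Z * QC := by
    have hX1 : (q:ℚ) ^ (j - m) - 1 ≤ X := by rw [hX]; linarith [hsgn.1]
    have hY1 : Y ≤ (q:ℚ) ^ (j - m) + 1 := by rw [hY]; linarith [hsgn.1]
    nlinarith [mul_le_mul hX1 hZ3 (by norm_num) (le_of_lt hXpos),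
      mul_le_mul (le_refl ((q:ℚ) ^ (j - m) - 1)) hZ3 (by norm_num) (by linarith)]
  -- put it together
  have key2 : Y * A / (D * Z) ≤ X * QC * (A / D) := by
    rw [div_le_iff₀ (by positivity)]
    have := mul_le_mul_of_nonneg_right hK (le_of_lt hApos)
    calc Y * A ≤ X * Z * QC * A := this
      _ = X * QC * (A / D) * (D * Z) := by field_simp
  calc P * (Y * A / (D * Z)) * QE = (P * QE) * (Y * A / (D * Z)) := by ring
    _ ≤ (P * QE) * (X * QC * (A / D)) := by
        exact mul_le_mul_of_nonneg_left key2 (by positivity)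
    _ = P * X * (A / D) * (QE * QC) := by ring
end
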